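/- arXiv:math/0008181 — 6 statements merged into one kernel-verified Lean document; each statement's English description precedes it below -/
import Mathlib

section
/- Let H be a Hilbert space, T ∈ B(H) with ‖T‖ ≤ 1, let χ ⊂ H be a finite set, R the orthogonal projection onto K = span(χ), and let ε > 0. Suppose Q is a finite rank projection with ‖[Q,T]‖ < ε and ‖Q(x) - x‖ < ε for all x in an ε-dense subset of the unit ball of K. Then ‖(1-R)QR‖ < 3ε, and the positive contraction X = RQR + (1-R)Q(1-R) satisfies ‖Q - X‖ < 3ε. -/
open Filter Topology

/-- `P` is a finite rank orthogonal projection on the Hilbert space `H`. -/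
def IsFinRankProj {H : Type*} [NormedAddCommGroup H] [InnerProductSpace ℂ H]
    (P : H →L[ℂ] H) : Prop :=
  P ∘L P = P ∧ (∀ x y : H, (inner ℂ (P x) y : ℂ) = inner ℂ x (P y)) ∧
    FiniteDimensional ℂ (LinearMap.range P.toLinearMap)

/-! Both `R` and `1 - R` are orthogonal projections, onto `K` and `Kᗮ`. A unit vector `y ∈ K`
lies within `ε` of some `x ∈ S`, and `(1 - R) x = 0`, so
`(1 - R) Q y = (1 - R) Q (y - x) + (1 - R) (Q x - x)` has norm at most `2ε`; hence
`‖(1 - R) Q R‖ ≤ 2ε`. The corner `R Q (1 - R)` is its adjoint, so has no larger norm, and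
`Q - X = (1 - R) Q R + R Q (1 - R)` is a sum of an operator from `K` to `Kᗮ` and one from `Kᗮ`
to `K`, whose norm is the larger of their norms by Pythagoras. -/

open scoped InnerProductSpace

section

variable {𝕜 E : Type*} [RCLike 𝕜] [NormedAddCommGroup E] [InnerProductSpace 𝕜 E]

theorem LinearMap.IsSymmetricProjection.norm_apply_le {p : E →ₗ[𝕜] E}
    (hp : p.IsSymmetricProjection) (v : E) : ‖p v‖ ≤ ‖v‖ := by
  obtain ⟨_, hpK⟩ := isSymmetricProjection_iff_eq_coe_starProjection_range.mp hp
  rw [hpK]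
  exact (LinearMap.range p).norm_starProjection_apply_le v

theorem ContinuousLinearMap.eq_starProjection_of_isSymmetricProjection {P : E →L[𝕜] E}
    (hP : (P : E →ₗ[𝕜] E).IsSymmetricProjection) {K : Submodule 𝕜 E}
    [K.HasOrthogonalProjection] (hK : LinearMap.range (P : E →ₗ[𝕜] E) = K) :
    P = K.starProjection := by
  obtain ⟨_, hPK⟩ := LinearMap.isSymmetricProjection_iff_eq_coe_starProjection_range.mp hP
  subst hK
  exact ContinuousLinearMap.coe_injective hPK

-- `E` need not be complete, so `B` is only known to be adjoint to `A` through this identity.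
theorem ContinuousLinearMap.norm_le_of_inner_map_eq {A B : E →L[𝕜] E}
    (h : ∀ u v, ⟪B u, v⟫_𝕜 = ⟪u, A v⟫_𝕜) : ‖B‖ ≤ ‖A‖ := by
  refine B.opNorm_le_bound (norm_nonneg A) fun u => ?_
  rcases (norm_nonneg (B u)).eq_or_lt with hBu | hBu
  · rw [← hBu]; positivity
  refine le_of_mul_le_mul_right ?_ hBu
  calc ‖B u‖ * ‖B u‖ = RCLike.re ⟪u, A (B u)⟫_𝕜 := by
        rw [← h, inner_self_eq_norm_mul_norm]
    _ ≤ ‖u‖ * ‖A (B u)‖ := re_inner_le_norm _ _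
    _ ≤ ‖u‖ * (‖A‖ * ‖B u‖) := by gcongr; exact A.le_opNorm _
    _ = ‖A‖ * ‖u‖ * ‖B u‖ := by ring

theorem sub_add_mul_mul_eq_add_mul_mul {A : Type*} [Ring A] (q p : A) :
    q - (p * (q * p) + (1 - p) * (q * (1 - p))) = (1 - p) * (q * p) + p * (q * (1 - p)) := by
  noncomm_ring

namespace Submodule

variable (K : Submodule 𝕜 E) [K.HasOrthogonalProjection]

theorem starProjection_apply_starProjection (v : E) :
    K.starProjection (K.starProjection v) = K.starProjection v :=
  K.starProjection_eq_self_iff.mpr (K.starProjection_apply_mem v)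

theorem norm_starProjection_orthogonal_comp_comp_le {Q : E →L[𝕜] E}
    (hQ : ∀ v, ‖Q v‖ ≤ ‖v‖) {S : Set E} (hSK : S ⊆ K) {ε : ℝ} (hε : 0 ≤ ε)
    (hSdense : ∀ y ∈ K, ‖y‖ ≤ 1 → ∃ x ∈ S, ‖y - x‖ ≤ ε) (hQS : ∀ x ∈ S, ‖Q x - x‖ ≤ ε) :
    ‖Kᗮ.starProjection ∘L Q ∘L K.starProjection‖ ≤ 2 * ε := by
  refine ContinuousLinearMap.opNorm_le_of_unit_norm (by positivity) fun u hu => ?_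
  set y := K.starProjection u
  obtain ⟨x, hxS, hyx⟩ := hSdense y (K.starProjection_apply_mem u)
    (hu ▸ K.norm_starProjection_apply_le u)
  have hsplit : Kᗮ.starProjection (Q y) =
      Kᗮ.starProjection (Q (y - x)) + Kᗮ.starProjection (Q x - x) := by
    simp only [map_sub, starProjection_orthogonal_apply_eq_zero (hSK hxS)]
    abel
  calc ‖Kᗮ.starProjection (Q y)‖
      ≤ ‖Kᗮ.starProjection (Q (y - x))‖ + ‖Kᗮ.starProjection (Q x - x)‖ :=
        hsplit ▸ norm_add_le _ _
    _ ≤ ‖y - x‖ + ‖Q x - x‖ := by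
        gcongr
        · exact (Kᗮ.norm_starProjection_apply_le _).trans (hQ _)
        · exact Kᗮ.norm_starProjection_apply_le _
    _ ≤ 2 * ε := by linarith [hQS x hxS]

theorem norm_starProjection_comp_comp_orthogonal_le {Q : E →L[𝕜] E}
    (hQ : (Q : E →ₗ[𝕜] E).IsSymmetric) :
    ‖K.starProjection ∘L Q ∘L Kᗮ.starProjection‖ ≤
      ‖Kᗮ.starProjection ∘L Q ∘L K.starProjection‖ :=
  ContinuousLinearMap.norm_le_of_inner_map_eq fun u v => by
    simp only [ContinuousLinearMap.comp_apply, inner_starProjection_left_eq_right]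
    rw [← inner_starProjection_left_eq_right Kᗮ u (Q _)]
    exact hQ _ _

theorem norm_offDiagonal_le (A B : E →L[𝕜] E) :
    ‖Kᗮ.starProjection ∘L A ∘L K.starProjection + K.starProjection ∘L B ∘L Kᗮ.starProjection‖ ≤
      max ‖Kᗮ.starProjection ∘L A ∘L K.starProjection‖
        ‖K.starProjection ∘L B ∘L Kᗮ.starProjection‖ := by
  set a := Kᗮ.starProjection ∘L A ∘L K.starProjection
  set b := K.starProjection ∘L B ∘L Kᗮ.starProjection
  set c := max ‖a‖ ‖b‖
  refine ContinuousLinearMap.opNorm_le_bound _ (by positivity) fun u => ?_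
  have ha : a u = a (K.starProjection u) := by
    simp [a, K.starProjection_apply_starProjection]
  have hb : b u = b (Kᗮ.starProjection u) := by
    simp only [b, ContinuousLinearMap.comp_apply, Kᗮ.starProjection_apply_starProjection]
  have horth : ⟪a u, b u⟫_𝕜 = 0 :=
    inner_left_of_mem_orthogonal (K.starProjection_apply_mem _) (Kᗮ.starProjection_apply_mem _)
  have hsq : ‖a u + b u‖ ^ 2 ≤ (c * ‖u‖) ^ 2 := calc
    ‖a u + b u‖ ^ 2 = ‖a (K.starProjection u)‖ ^ 2 + ‖b (Kᗮ.starProjection u)‖ ^ 2 := by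
        rw [sq, sq, sq, norm_add_sq_eq_norm_sq_add_norm_sq_of_inner_eq_zero _ _ horth, ← ha, ← hb]
    _ ≤ (c * ‖K.starProjection u‖) ^ 2 + (c * ‖Kᗮ.starProjection u‖) ^ 2 := by
        gcongr
        · exact a.le_of_opNorm_le (le_max_left _ _) _
        · exact b.le_of_opNorm_le (le_max_right _ _) _
    _ = (c * ‖u‖) ^ 2 := by
        rw [mul_pow, mul_pow, mul_pow, ← mul_add, ← K.norm_sq_eq_add_norm_sq_starProjection]
  exact pow_le_pow_iff_left₀ (norm_nonneg _) (by positivity) two_ne_zero |>.mp hsq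

end Submodule

end

theorem corner_estimate_general {H : Type*} [NormedAddCommGroup H] [InnerProductSpace ℂ H]
    (χ : Finset H) (ε : ℝ) (hε : 0 < ε)
    (R Q : H →L[ℂ] H)
    (hRproj : R ∘L R = R) (hRsa : ∀ x y : H, (inner ℂ (R x) y : ℂ) = inner ℂ x (R y))
    (hRrange : LinearMap.range R.toLinearMap = Submodule.span ℂ (χ : Set H))
    (hQ : IsFinRankProj Q)
    (S : Set H)
    (hS : S ⊆ {x : H | x ∈ Submodule.span ℂ (χ : Set H) ∧ ‖x‖ ≤ 1})
    (hSdense : ∀ y ∈ Submodule.span ℂ (χ : Set H), ‖y‖ ≤ 1 → ∃ x ∈ S, ‖y - x‖ ≤ ε)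
    (hQS : ∀ x ∈ S, ‖Q x - x‖ < ε) :
    ‖(1 - R) ∘L Q ∘L R‖ < 3 * ε ∧
      ‖Q - (R ∘L Q ∘L R + (1 - R) ∘L Q ∘L (1 - R))‖ < 3 * ε := by
  set K := Submodule.span ℂ (χ : Set H)
  obtain ⟨hQproj, hQsa, -⟩ := hQ
  have hQsp : (Q : H →ₗ[ℂ] H).IsSymmetricProjection :=
    ⟨congrArg ContinuousLinearMap.toLinearMap hQproj, hQsa⟩
  obtain rfl : R = K.starProjection :=
    R.eq_starProjection_of_isSymmetricProjection
      ⟨congrArg ContinuousLinearMap.toLinearMap hRproj, hRsa⟩ hRrange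
  rw [← K.starProjection_orthogonal']
  have hlower : ‖Kᗮ.starProjection ∘L Q ∘L K.starProjection‖ ≤ 2 * ε :=
    K.norm_starProjection_orthogonal_comp_comp_le hQsp.norm_apply_le (fun x hx => (hS hx).1)
      hε.le hSdense fun x hx => (hQS x hx).le
  have hupper := K.norm_starProjection_comp_comp_orthogonal_le hQsa
  have hdecomp := sub_add_mul_mul_eq_add_mul_mul Q K.starProjection
  simp only [← K.starProjection_orthogonal', ContinuousLinearMap.mul_def] at hdecomp
  refine ⟨by linarith, ?_⟩
  rw [hdecomp]
  calc _ ≤ max _ _ := K.norm_offDiagonal_le Q Q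
    _ ≤ 2 * ε := max_le hlower (hupper.trans hlower)
    _ < 3 * ε := by linarith

/-- Let `T` be a contraction, `χ` a finite set spanning `K`, `R` the orthogonal projection
onto `K`, and `Q` a finite rank projection almost commuting with `T` and almost fixing an
`ε`-dense subset `S` of the unit ball of `K`.  Then `‖(1-R)QR‖ < 3ε` and
`X = RQR + (1-R)Q(1-R)` satisfies `‖Q - X‖ < 3ε`. -/
theorem corner_estimate {H : Type*} [NormedAddCommGroup H] [InnerProductSpace ℂ H]
    (T : H →L[ℂ] H) (hT : ‖T‖ ≤ 1) (χ : Finset H) (ε : ℝ) (hε : 0 < ε)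
    (R Q : H →L[ℂ] H)
    (hRproj : R ∘L R = R) (hRsa : ∀ x y : H, (inner ℂ (R x) y : ℂ) = inner ℂ x (R y))
    (hRrange : LinearMap.range R.toLinearMap = Submodule.span ℂ (χ : Set H))
    (hQ : IsFinRankProj Q)
    (hQT : ‖Q ∘L T - T ∘L Q‖ < ε)
    (S : Set H)
    (hS : S ⊆ {x : H | x ∈ Submodule.span ℂ (χ : Set H) ∧ ‖x‖ ≤ 1})
    (hSdense : ∀ y ∈ Submodule.span ℂ (χ : Set H), ‖y‖ ≤ 1 → ∃ x ∈ S, ‖y - x‖ ≤ ε)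
    (hQS : ∀ x ∈ S, ‖Q x - x‖ < ε) :
    ‖(1 - R) ∘L Q ∘L R‖ < 3 * ε ∧
      ‖Q - (R ∘L Q ∘L R + (1 - R) ∘L Q ∘L (1 - R))‖ < 3 * ε :=
  corner_estimate_general χ ε hε R Q hRproj hRsa hRrange hQ S hS hSdense hQS
end

section
/- Let A ⊂ B(H) be a C*-algebra of operators, F ⊂ A a finite set, and ε > 0. Suppose (E_n) is a sequence of mutually orthogonal finite rank projections summing strongly to 1 such that Σ_n ‖[E_n, a]‖ < ∞ for each a in a dense subset of the unit ball of A. Then the map δ(a) = Σ_n E_n a E_n (strong operator convergent sum) is a well-defined contractive completely positive map, and for each a in the dense subset, a - δ(a) is a compact operator. -/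
/-!
The compressions `E n ∘L a ∘L E n` take values in the mutually orthogonal ranges of the `E n`,
so by Pythagoras and Parseval `∑ ‖E n a E n x‖² ≤ ‖a‖² ∑ ‖E n x‖² = ‖a‖² ‖x‖²`: the series
converges strongly and defines a contraction `δ a`. Complete positivity holds termwise, since
`∑ᵢⱼ cᵢ* Eₙ aᵢ* aⱼ Eₙ cⱼ = W* W` with `W = ∑ⱼ aⱼ Eₙ cⱼ`, and positivity survives strong limits.
Finally `a - δ a = ∑ (a Eₙ - Eₙ a) Eₙ`, which converges in norm when the commutator norms are
summable; its terms have finite rank, so `a - δ a` is compact.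
-/

open Filter Topology

open scoped ComplexOrder InnerProductSpace

section General

variable {𝕜 E ι : Type*} [RCLike 𝕜] [NormedAddCommGroup E] [InnerProductSpace 𝕜 E]

theorem OrthogonalFamily.hasSum_norm_sq {G : ι → Submodule 𝕜 E}
    (hG : OrthogonalFamily 𝕜 (fun i => G i) fun i => (G i).subtypeₗᵢ)
    {f : ι → E} (hf : ∀ i, f i ∈ G i) {x : E} (h : HasSum f x) :
    HasSum (fun i => ‖f i‖ ^ 2) (‖x‖ ^ 2) := by
  have hsum_sq (s : Finset ι) : ∑ i ∈ s, ‖f i‖ ^ 2 = ‖∑ i ∈ s, f i‖ ^ 2 := by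
    simpa using (hG.norm_sum (fun i => (⟨f i, hf i⟩ : G i)) s).symm
  simpa only [HasSum, hsum_sq, SummationFilter.unconditional_filter, Function.comp_def] using
    ((continuous_norm.tendsto x).pow 2).comp h

theorem OrthogonalFamily.summable_of_summable_norm_sq [CompleteSpace E] {G : ι → Submodule 𝕜 E}
    (hG : OrthogonalFamily 𝕜 (fun i => G i) fun i => (G i).subtypeₗᵢ)
    {f : ι → E} (hf : ∀ i, f i ∈ G i) (hsq : Summable fun i => ‖f i‖ ^ 2) :
    Summable f := by
  simpa using
    (hG.summable_iff_norm_sq_summable fun i => (⟨f i, hf i⟩ : G i)).2 (by simpa using hsq)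

theorem ContinuousLinearMap.IsPositive.of_hasSum_apply {T : ι → E →L[𝕜] E} {S : E →L[𝕜] E}
    (hT : ∀ i, (T i).IsPositive) (h : ∀ x, HasSum (fun i => T i x) (S x)) : S.IsPositive := by
  have hinner (x y : E) : HasSum (fun i => ⟪T i x, y⟫_𝕜) ⟪S x, y⟫_𝕜 := by
    simpa only [innerSL_apply_apply, ← starRingEnd_apply, inner_conj_symm] using
      ((h x).mapL (innerSL 𝕜 y)).star
  refine (isPositive_iff S).2
    ⟨fun x y => (hinner x y).unique ?_,
      fun x => (hinner x x).nonneg fun i => (hT i).inner_nonneg_left x⟩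
  simpa only [innerSL_apply_apply, ContinuousLinearMap.coe_coe,
    (hT _).inner_left_eq_inner_right] using (h y).mapL (innerSL 𝕜 x)

theorem ContinuousLinearMap.isCompactOperator_of_finiteDimensional_range {F : Type*}
    [NormedAddCommGroup F] [NormedSpace 𝕜 F] (f : E →L[𝕜] F)
    [FiniteDimensional 𝕜 (LinearMap.range f.toLinearMap)] : IsCompactOperator f :=
  (isCompactOperator_of_locallyCompactSpace_dom
    (f.codRestrict _ (LinearMap.mem_range_self f.toLinearMap))).continuous_comp
    continuous_subtype_val

end General

theorem IsCompactOperator.of_hasSum {𝕜 E F ι : Type*} [NontriviallyNormedField 𝕜]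
    [NormedAddCommGroup E] [NormedSpace 𝕜 E] [NormedAddCommGroup F] [NormedSpace 𝕜 F]
    [CompleteSpace F] {f : ι → E →L[𝕜] F} {g : E →L[𝕜] F} (hf : HasSum f g)
    (hc : ∀ i, IsCompactOperator (f i)) : IsCompactOperator g :=
  isCompactOperator_of_tendsto hf <| Eventually.of_forall fun _ =>
    (compactOperator (RingHom.id 𝕜) E F).sum_mem fun i _ => hc i

section Pinching

variable {𝕜 H ι : Type*} [RCLike 𝕜] [NormedAddCommGroup H] [InnerProductSpace 𝕜 H]
  [CompleteSpace H]

structure IsResolutionOfIdentity (E : ι → H →L[𝕜] H) : Prop where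
  isStarProjection : ∀ i, IsStarProjection (E i)
  mul_eq_zero : Pairwise fun i j => E i * E j = 0
  hasSum_apply : ∀ x, HasSum (fun i => E i x) x

namespace IsResolutionOfIdentity

variable {E : ι → H →L[𝕜] H} (hE : IsResolutionOfIdentity E)
include hE

theorem apply_apply (i : ι) (x : H) : E i (E i x) = E i x :=
  congr($((hE.isStarProjection i).isIdempotentElem.eq) x)

theorem norm_apply_le (i : ι) (x : H) : ‖E i x‖ ≤ ‖x‖ := by
  simpa using (E i).le_of_opNorm_le ((hE.isStarProjection i).norm_le) x

theorem orthogonalFamily :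
    OrthogonalFamily 𝕜 (fun i => LinearMap.range (E i).toLinearMap)
      fun i => (LinearMap.range (E i).toLinearMap).subtypeₗᵢ := by
  rintro i j hij ⟨_, u, rfl⟩ ⟨_, v, rfl⟩
  have hEij : E i (E j v) = 0 := by simpa using congr($(hE.mul_eq_zero hij) v)
  change ⟪E i u, E j v⟫_𝕜 = 0
  simpa [hEij] using (hE.isStarProjection i).isSelfAdjoint.isSymmetric u (E j v)

theorem hasSum_norm_sq_apply (x : H) : HasSum (fun i => ‖E i x‖ ^ 2) (‖x‖ ^ 2) :=
  hE.orthogonalFamily.hasSum_norm_sq (fun _ => LinearMap.mem_range_self _ x) (hE.hasSum_apply x)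

theorem norm_compress_apply_sq_le (a : H →L[𝕜] H) (x : H) (i : ι) :
    ‖(E i ∘L a ∘L E i) x‖ ^ 2 ≤ ‖a‖ ^ 2 * ‖E i x‖ ^ 2 := by
  rw [← mul_pow]
  gcongr
  exact (hE.norm_apply_le i _).trans (a.le_opNorm _)

theorem summable_compress_apply (a : H →L[𝕜] H) (x : H) :
    Summable fun i => (E i ∘L a ∘L E i) x :=
  hE.orthogonalFamily.summable_of_summable_norm_sq (fun _ => LinearMap.mem_range_self _ _) <|
    .of_nonneg_of_le (fun _ => sq_nonneg _) (hE.norm_compress_apply_sq_le a x)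
      ((hE.hasSum_norm_sq_apply x).summable.mul_left _)

theorem norm_tsum_compress_apply_le (a : H →L[𝕜] H) (x : H) :
    ‖∑' i, (E i ∘L a ∘L E i) x‖ ≤ ‖a‖ * ‖x‖ := by
  refine le_of_sq_le_sq ?_ (by positivity)
  rw [mul_pow]
  exact hasSum_le (hE.norm_compress_apply_sq_le a x)
    (hE.orthogonalFamily.hasSum_norm_sq (fun _ => LinearMap.mem_range_self _ _)
      (hE.summable_compress_apply a x).hasSum)
    ((hE.hasSum_norm_sq_apply x).mul_left _)

noncomputable def pinching : (H →L[𝕜] H) →ₗ[𝕜] H →L[𝕜] H where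
  toFun a := LinearMap.mkContinuous
    { toFun x := ∑' i, (E i ∘L a ∘L E i) x
      map_add' x y := by
        simp only [map_add]
        exact (hE.summable_compress_apply a x).tsum_add (hE.summable_compress_apply a y)
      map_smul' c x := by
        simp only [map_smul]
        exact (hE.summable_compress_apply a x).tsum_const_smul c }
    ‖a‖ (hE.norm_tsum_compress_apply_le a)
  map_add' a b := by
    ext x
    simp only [ContinuousLinearMap.comp_add, ContinuousLinearMap.add_comp]
    exact (hE.summable_compress_apply a x).tsum_add (hE.summable_compress_apply b x)
  map_smul' c a := by
    ext x
    simp only [ContinuousLinearMap.comp_smul, ContinuousLinearMap.smul_comp]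
    exact (hE.summable_compress_apply a x).tsum_const_smul c

theorem hasSum_pinching_apply (a : H →L[𝕜] H) (x : H) :
    HasSum (fun i => (E i ∘L a ∘L E i) x) (hE.pinching a x) :=
  (hE.summable_compress_apply a x).hasSum

theorem norm_pinching_le (a : H →L[𝕜] H) : ‖hE.pinching a‖ ≤ ‖a‖ :=
  LinearMap.mkContinuous_norm_le _ (norm_nonneg a) (hE.norm_tsum_compress_apply_le a)

theorem isPositive_sum_star_mul_pinching_mul {κ : Type*} [Fintype κ] (a c : κ → H →L[𝕜] H) :
    (∑ i, ∑ j, star (c i) * hE.pinching (star (a i) * a j) * c j).IsPositive := by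
  set W : ι → H →L[𝕜] H := fun n => ∑ j, a j * E n * c j
  have hW (n : ι) : star (W n) * W n =
      ∑ i, ∑ j, star (c i) * (E n ∘L (star (a i) * a j) ∘L E n) * c j := by
    simp only [W, star_sum, Finset.sum_mul_sum, star_mul,
      (hE.isStarProjection n).isSelfAdjoint.star_eq, ← ContinuousLinearMap.mul_def, mul_assoc]
  refine .of_hasSum_apply (T := fun n => star (W n) * W n)
    (fun n => (W n).isPositive_adjoint_comp_self) fun x => ?_
  simp only [hW, sum_apply, mul_apply_eq_comp]
  exact hasSum_sum fun i _ => hasSum_sum fun j _ =>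
    (hE.hasSum_pinching_apply _ _).mapL (star (c i))

theorem hasSum_commutator_comp {a : H →L[𝕜] H}
    (ha : Summable fun i => ‖E i ∘L a - a ∘L E i‖) :
    HasSum (fun i => (a ∘L E i - E i ∘L a) ∘L E i) (a - hE.pinching a) := by
  have hnorm (i : ι) : ‖(a ∘L E i - E i ∘L a) ∘L E i‖ ≤ ‖E i ∘L a - a ∘L E i‖ :=
    calc _ ≤ ‖a ∘L E i - E i ∘L a‖ * ‖E i‖ := ContinuousLinearMap.opNorm_comp_le _ _
      _ ≤ ‖E i ∘L a - a ∘L E i‖ := by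
        rw [norm_sub_rev]
        exact mul_le_of_le_one_right (norm_nonneg _) (hE.isStarProjection i).norm_le
  obtain ⟨K, hK⟩ := Summable.of_norm_bounded ha hnorm
  suffices hKeq : K = a - hE.pinching a from hKeq ▸ hK
  ext x
  refine (hK.mapL (ContinuousLinearMap.apply 𝕜 H x)).unique ?_
  simpa [hE.apply_apply] using
    ((hE.hasSum_apply x).mapL a).sub (hE.hasSum_pinching_apply a x)

theorem isCompactOperator_sub_pinching (hcomp : ∀ i, IsCompactOperator (E i)) {a : H →L[𝕜] H}
    (ha : Summable fun i => ‖E i ∘L a - a ∘L E i‖) :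
    IsCompactOperator (a - hE.pinching a) :=
  IsCompactOperator.of_hasSum (hE.hasSum_commutator_comp ha) fun i =>
    (hcomp i).clm_comp (a ∘L E i - E i ∘L a)

end IsResolutionOfIdentity

end Pinching

section FinRank

variable {H : Type*} [NormedAddCommGroup H] [InnerProductSpace ℂ H] {P : H →L[ℂ] H}

theorem IsFinRankProj.isStarProjection [CompleteSpace H] (hP : IsFinRankProj P) :
    IsStarProjection P :=
  ⟨hP.1, LinearMap.IsSymmetric.isSelfAdjoint hP.2.1⟩

theorem IsFinRankProj.isCompactOperator (hP : IsFinRankProj P) : IsCompactOperator P :=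
  haveI := hP.2.2
  P.isCompactOperator_of_finiteDimensional_range

end FinRank

theorem pinching_map_ccp_and_compact_difference_general {H : Type*} [NormedAddCommGroup H]
    [InnerProductSpace ℂ H] [CompleteSpace H]
    (E : ℕ → H →L[ℂ] H) (hEproj : ∀ n, IsFinRankProj (E n))
    (horth : ∀ m n, m ≠ n → E m ∘L E n = 0)
    (hsum : ∀ x : H, HasSum (fun n => E n x) x)
    (S : Set (H →L[ℂ] H))
    (hsummable : ∀ a ∈ S, Summable fun n => ‖E n ∘L a - a ∘L E n‖) :
    ∃ δmap : (H →L[ℂ] H) →ₗ[ℂ] (H →L[ℂ] H),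
      (∀ (a : H →L[ℂ] H) (x : H), HasSum (fun n => (E n ∘L a ∘L E n) x) (δmap a x)) ∧
      (∀ a : H →L[ℂ] H, ‖δmap a‖ ≤ ‖a‖) ∧
      (∀ (k : ℕ) (a c : Fin k → (H →L[ℂ] H)),
        (∑ i, ∑ j, star (c i) * δmap (star (a i) * a j) * c j).IsPositive) ∧
      ∀ a ∈ S, IsCompactOperator ⇑(a - δmap a) := by
  have hE : IsResolutionOfIdentity E :=
    ⟨fun n => (hEproj n).isStarProjection, fun m n hmn => horth m n hmn, hsum⟩
  exact ⟨hE.pinching, hE.hasSum_pinching_apply, hE.norm_pinching_le,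
    fun _ => hE.isPositive_sum_star_mul_pinching_mul,
    fun a ha => hE.isCompactOperator_sub_pinching (fun n => (hEproj n).isCompactOperator)
      (hsummable a ha)⟩

/-- Given mutually orthogonal finite rank projections `E n` summing strongly to `1` such
that `∑ ‖[E n, a]‖ < ∞` for all `a` in a dense subset `S` of the unit ball of a
`C*`-algebra `A ⊆ B(H)`, the map `δ(a) = ∑ₙ Eₙ a Eₙ` (strongly convergent sums) is a
well-defined contractive completely positive map, and `a - δ(a)` is compact for `a ∈ S`. -/
theorem pinching_map_ccp_and_compact_difference {H : Type*} [NormedAddCommGroup H]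
    [InnerProductSpace ℂ H] [CompleteSpace H] [TopologicalSpace.SeparableSpace H]
    (A : StarSubalgebra ℂ (H →L[ℂ] H)) (hA : IsClosed (A : Set (H →L[ℂ] H)))
    (F : Finset (H →L[ℂ] H)) (hF : ↑F ⊆ (A : Set (H →L[ℂ] H))) (ε : ℝ) (hε : 0 < ε)
    (E : ℕ → H →L[ℂ] H) (hEproj : ∀ n, IsFinRankProj (E n))
    (horth : ∀ m n, m ≠ n → E m ∘L E n = 0)
    (hsum : ∀ x : H, HasSum (fun n => E n x) x)
    (S : Set (H →L[ℂ] H)) (hSA : S ⊆ (A : Set (H →L[ℂ] H)))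
    (hSball : ∀ a ∈ S, ‖a‖ ≤ 1)
    (hSdense : ∀ a ∈ A, ‖a‖ ≤ 1 → ∀ δ : ℝ, 0 < δ → ∃ b ∈ S, ‖a - b‖ ≤ δ)
    (hsummable : ∀ a ∈ S, Summable fun n => ‖E n ∘L a - a ∘L E n‖) :
    ∃ δmap : (H →L[ℂ] H) →ₗ[ℂ] (H →L[ℂ] H),
      (∀ (a : H →L[ℂ] H) (x : H), HasSum (fun n => (E n ∘L a ∘L E n) x) (δmap a x)) ∧
      (∀ a : H →L[ℂ] H, ‖δmap a‖ ≤ ‖a‖) ∧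
      (∀ (k : ℕ) (a c : Fin k → (H →L[ℂ] H)),
        (∑ i, ∑ j, star (c i) * δmap (star (a i) * a j) * c j).IsPositive) ∧
      ∀ a ∈ S, IsCompactOperator ⇑(a - δmap a) :=
  pinching_map_ccp_and_compact_difference_general E hEproj horth hsum S hsummable
end

section
/- Let A be a unital C*-algebra, (φ_i) a sequence of unital completely positive maps φ_i : A → M_{n(i)}(ℂ) which is asymptotically multiplicative (‖φ_i(ab) - φ_i(a)φ_i(b)‖ → 0 for all a,b ∈ A), and let τ_{n(i)} be the normalized trace on M_{n(i)}(ℂ). Then any weak-* limit point τ of the sequence of states (τ_{n(i)} ∘ φ_i) satisfies τ(ab) = τ(ba) for all a, b ∈ A. -/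
open Filter Topology
open scoped ComplexOrder

/-- The algebra `B(ℂⁿ) ≅ Mₙ(ℂ)`. -/
abbrev MatOp (n : ℕ) := EuclideanSpace ℂ (Fin n) →L[ℂ] EuclideanSpace ℂ (Fin n)

/-- Complete positivity of a linear map into `Mₙ(ℂ)`. -/
def IsCPIntoMat {A : Type*} [NonUnitalNormedRing A] [StarRing A] [Module ℂ A] {n : ℕ}
    (φ : A →ₗ[ℂ] MatOp n) : Prop :=
  ∀ (k : ℕ) (a : Fin k → A) (c : Fin k → MatOp n),
    (∑ i, ∑ j, star (c i) * φ (star (a i) * a j) * c j).IsPositive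

/-- The normalized trace on `Mₙ(ℂ)`. -/
noncomputable def normalizedTrace (n : ℕ) (T : MatOp n) : ℂ :=
  LinearMap.trace ℂ (EuclideanSpace ℂ (Fin n)) T.toLinearMap / n

/-!
The normalized trace is contractive for the operator norm, so asymptotic multiplicativity gives
`τ(ab) = lim τₙ(φᵢ(a) φᵢ(b))`. Since `τₙ(ST) = τₙ(TS)`, the same limit is `τ(ba)`.
-/

theorem ContinuousLinearMap.norm_trace_le {𝕜 E : Type*} [RCLike 𝕜] [NormedAddCommGroup E]
    [InnerProductSpace 𝕜 E] [FiniteDimensional 𝕜 E] (T : E →L[𝕜] E) :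
    ‖LinearMap.trace 𝕜 E T‖ ≤ Module.finrank 𝕜 E * ‖T‖ := by
  let b := stdOrthonormalBasis 𝕜 E
  calc ‖LinearMap.trace 𝕜 E T‖ = ‖∑ i, inner 𝕜 (b i) (T (b i))‖ := by
        rw [LinearMap.trace_eq_sum_inner _ b]; rfl
    _ ≤ ∑ i, ‖b i‖ * ‖T (b i)‖ :=
        (norm_sum_le _ _).trans (Finset.sum_le_sum fun i _ => norm_inner_le_norm _ _)
    _ ≤ ∑ i, ‖T‖ := Finset.sum_le_sum fun i _ => by
        simpa [b.orthonormal.1 i] using T.le_opNorm (b i)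
    _ = Module.finrank 𝕜 E * ‖T‖ := by simp

theorem norm_normalizedTrace_le (n : ℕ) (T : MatOp n) : ‖normalizedTrace n T‖ ≤ ‖T‖ := by
  rcases Nat.eq_zero_or_pos n with rfl | hn
  · simp [normalizedTrace]
  have := T.norm_trace_le
  rw [finrank_euclideanSpace_fin] at this
  rw [normalizedTrace, norm_div, Complex.norm_natCast, div_le_iff₀' (by positivity)]
  exact this

theorem normalizedTrace_sub (n : ℕ) (S T : MatOp n) :
    normalizedTrace n (S - T) = normalizedTrace n S - normalizedTrace n T := by
  simp only [normalizedTrace, ContinuousLinearMap.toLinearMap_sub, map_sub, sub_div]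

theorem normalizedTrace_mul_comm (n : ℕ) (S T : MatOp n) :
    normalizedTrace n (S * T) = normalizedTrace n (T * S) :=
  congrArg (· / (n : ℂ)) (LinearMap.trace_mul_comm ℂ S.toLinearMap T.toLinearMap)

theorem tendsto_normalizedTrace_of_norm_sub_tendsto_zero {n : ℕ → ℕ}
    {S T : ∀ i, MatOp (n i)} {L : Filter ℕ} {l : ℂ}
    (hST : Tendsto (fun i => ‖S i - T i‖) L (𝓝 0))
    (hS : Tendsto (fun i => normalizedTrace (n i) (S i)) L (𝓝 l)) :
    Tendsto (fun i => normalizedTrace (n i) (T i)) L (𝓝 l) := by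
  have hdiff : Tendsto (fun i => normalizedTrace (n i) (S i) - normalizedTrace (n i) (T i))
      L (𝓝 0) :=
    squeeze_zero_norm (fun i => normalizedTrace_sub _ _ _ ▸ norm_normalizedTrace_le _ _) hST
  simpa using hS.sub hdiff

theorem limit_of_matrix_traces_is_tracial_general {A : Type*} [CStarAlgebra A]
    (n : ℕ → ℕ) (φ : ∀ i, A →ₗ[ℂ] MatOp (n i))
    (hmult : ∀ a b : A, Tendsto (fun i => ‖φ i (a * b) - φ i a * φ i b‖) atTop (𝓝 0))
    (τ : A →ₗ[ℂ] ℂ) (L : Filter ℕ) (hLne : L.NeBot) (hL : L ≤ atTop)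
    (hlim : ∀ a : A, Tendsto (fun i => normalizedTrace (n i) (φ i a)) L (𝓝 (τ a))) :
    ∀ a b : A, τ (a * b) = τ (b * a) := by
  have key (x y : A) : Tendsto (fun i => normalizedTrace (n i) (φ i x * φ i y)) L
      (𝓝 (τ (x * y))) :=
    tendsto_normalizedTrace_of_norm_sub_tendsto_zero ((hmult x y).mono_left hL) (hlim (x * y))
  intro a b
  refine tendsto_nhds_unique (key a b) ?_
  simpa only [normalizedTrace_mul_comm] using key b a

/-- If `(φᵢ)` is an asymptotically multiplicative sequence of unital completely positive
maps from a unital `C*`-algebra `A` into matrix algebras, then any weak-* limit point `τ`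
of the states `τ_{n(i)} ∘ φᵢ` (i.e. any limit along a nontrivial filter finer than `atTop`)
is tracial: `τ(ab) = τ(ba)`. -/
theorem limit_of_matrix_traces_is_tracial {A : Type*} [CStarAlgebra A]
    (n : ℕ → ℕ) (φ : ∀ i, A →ₗ[ℂ] MatOp (n i))
    (hunital : ∀ i, φ i 1 = 1)
    (hcp : ∀ i, IsCPIntoMat (φ i))
    (hmult : ∀ a b : A, Tendsto (fun i => ‖φ i (a * b) - φ i a * φ i b‖) atTop (𝓝 0))
    (τ : A →ₗ[ℂ] ℂ) (L : Filter ℕ) (hLne : L.NeBot) (hL : L ≤ atTop)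
    (hlim : ∀ a : A, Tendsto (fun i => normalizedTrace (n i) (φ i a)) L (𝓝 (τ a))) :
    ∀ a b : A, τ (a * b) = τ (b * a) :=
  limit_of_matrix_traces_is_tracial_general n φ hmult τ L hLne hL hlim
end

section
/- Let (A_n) be a sequence of C*-algebras. Then the direct product Π_n A_n (bounded sequences with the sup norm) is quasidiagonal if and only if each A_n is quasidiagonal. -/
open Filter Topology

/-- `S ⊆ B(H)` is a quasidiagonal set of operators. -/
def QDSet {H : Type*} [NormedAddCommGroup H] [InnerProductSpace ℂ H]
    (S : Set (H →L[ℂ] H)) : Prop :=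
  ∀ (ω : Finset (H →L[ℂ] H)), ↑ω ⊆ S → ∀ (χ : Finset H) (ε : ℝ), 0 < ε →
    ∃ P : H →L[ℂ] H, IsFinRankProj P ∧ (∀ T ∈ ω, ‖T ∘L P - P ∘L T‖ ≤ ε) ∧
      ∀ x ∈ χ, ‖P x - x‖ ≤ ε

/-- A representation of `A` on a Hilbert space. -/
structure HilbertRep (A : Type*) [NonUnitalNormedRing A] [StarRing A] [Module ℂ A] where
  space : Type
  [nacg : NormedAddCommGroup space]
  [ipc : InnerProductSpace ℂ space]
  [cs : CompleteSpace space]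
  hom : A →⋆ₙₐ[ℂ] (space →L[ℂ] space)

/-- A `C*`-algebra is quasidiagonal if it has a faithful representation whose image is a
quasidiagonal set of operators. -/
def IsQD (A : Type*) [NonUnitalNormedRing A] [StarRing A] [Module ℂ A] : Prop :=
  ∃ r : HilbertRep A,
    letI := r.nacg; letI := r.ipc; letI := r.cs
    Function.Injective r.hom ∧ QDSet (Set.range r.hom)

open scoped ENNReal

/-!
Each `A n` embeds in the product as a coordinate, and a C*-subalgebra of a quasidiagonal algebra
is quasidiagonal. Conversely, faithful quasidiagonal representations `πₙ` on `Hₙ` assemble into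
a faithful representation of the product by block-diagonal operators on the Hilbert sum
`ℓ²(Hₙ)`. Given finitely many operators and vectors, all vectors are within `ε / 2` of their
truncations to a finite set `s` of blocks; in each block of `s` pick a finite-rank projection
`δ`-commuting with the relevant entries and `δ`-fixing the relevant coordinates. Their direct sum
(zero off `s`) is a finite-rank projection whose commutators are bounded blockwise, and it moves
each vector by at most `|s| δ + ε / 2`.
-/

theorem isFinRankProj_iff {H : Type*} [NormedAddCommGroup H] [InnerProductSpace ℂ H]
    [CompleteSpace H] {P : H →L[ℂ] H} :
    IsFinRankProj P ↔
      IsStarProjection P ∧ FiniteDimensional ℂ (LinearMap.range P.toLinearMap) := by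
  rw [isStarProjection_iff, ContinuousLinearMap.isSelfAdjoint_iff_isSymmetric]
  exact and_assoc.symm

theorem isFinRankProj_zero {H : Type*} [NormedAddCommGroup H] [InnerProductSpace ℂ H] :
    IsFinRankProj (0 : H →L[ℂ] H) := by
  refine ⟨ContinuousLinearMap.zero_comp 0, fun x y => by simp, ?_⟩
  rw [ContinuousLinearMap.toLinearMap_zero, LinearMap.range_zero]
  infer_instance

theorem QDSet.mono {H : Type*} [NormedAddCommGroup H] [InnerProductSpace ℂ H]
    {S T : Set (H →L[ℂ] H)} (hST : S ⊆ T) (hT : QDSet T) : QDSet S :=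
  fun ω hω => hT ω (hω.trans hST)

theorem IsQD.of_injective {A B : Type*} [NonUnitalNormedRing A] [StarRing A] [Module ℂ A]
    [NonUnitalNormedRing B] [StarRing B] [Module ℂ B] (φ : A →⋆ₙₐ[ℂ] B)
    (hφ : Function.Injective φ) (hB : IsQD B) : IsQD A := by
  obtain ⟨r, hinj, hqd⟩ := hB
  let := r.nacg; let := r.ipc; let := r.cs
  exact ⟨⟨r.space, r.hom.comp φ⟩, hinj.comp hφ, hqd.mono (Set.range_comp_subset_range φ r.hom)⟩

namespace lp

section Single

variable {ι : Type*} [DecidableEq ι]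

theorem sum_single_apply {E : ι → Type*} [∀ i, NormedAddCommGroup (E i)] {p : ℝ≥0∞}
    (s : Finset ι) (f : ∀ i, E i) (j : ι) :
    (∑ i ∈ s, lp.single p i (f i)) j = if j ∈ s then f j else 0 := by
  rw [lp.coeFn_sum, Finset.sum_apply]
  by_cases hj : j ∈ s <;> simp [lp.single_apply, hj]

theorem exists_finset_forall_norm_sub_sum_single_lt {E : ι → Type*}
    [∀ i, NormedAddCommGroup (E i)] {p : ℝ≥0∞} [Fact (1 ≤ p)] (hp : p ≠ ∞)
    (χ : Finset (lp E p)) {ε : ℝ} (hε : 0 < ε) :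
    ∃ s : Finset ι, ∀ x ∈ χ, ‖x - ∑ i ∈ s, lp.single p i (x i)‖ < ε := by
  have hsums : ∀ᶠ s in Filter.atTop, ∀ x ∈ χ, ‖x - ∑ i ∈ s, lp.single p i (x i)‖ < ε :=
    (Filter.eventually_all_finset χ).mpr fun x _ => by
      simpa only [dist_eq_norm', SummationFilter.unconditional_filter] using
        Metric.tendsto_nhds.mp (lp.hasSum_single hp x) ε hε
  exact hsums.exists

variable {B : ι → Type*} [∀ i, NonUnitalNormedRing (B i)] [∀ i, StarRing (B i)]
  [∀ i, NormedStarGroup (B i)] [∀ i, Module ℂ (B i)] [∀ i, IsBoundedSMul ℂ (B i)]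

noncomputable def singleNonUnitalStarAlgHom (i : ι) : B i →⋆ₙₐ[ℂ] lp B ∞ where
  toFun := lp.single ∞ i
  map_smul' := lp.single_smul ∞ i
  map_zero' := lp.single_zero ∞ i
  map_add' := lp.single_add ∞ i
  map_mul' a b := lp.ext <| by simp [lp.infty_coeFn_mul, lp.coeFn_single, Pi.single_mul]
  map_star' a := lp.ext <| by simp [lp.coeFn_star, lp.coeFn_single]

theorem singleNonUnitalStarAlgHom_injective (i : ι) :
    Function.Injective (singleNonUnitalStarAlgHom (B := B) i) :=
  fun a b hab => by simpa [singleNonUnitalStarAlgHom] using congr($hab i)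

end Single

theorem isStarProjection_iff {ι : Type*} {B : ι → Type*} [∀ i, NonUnitalNormedRing (B i)]
    [∀ i, StarRing (B i)] [∀ i, NormedStarGroup (B i)] {q : lp B ∞} :
    IsStarProjection q ↔ ∀ i, IsStarProjection (q i) := by
  simp only [_root_.isStarProjection_iff, IsIdempotentElem, IsSelfAdjoint, lp.ext_iff,
    funext_iff, lp.infty_coeFn_mul, lp.coeFn_star, Pi.mul_apply, Pi.star_apply, forall_and]

section InftyMap

variable {ι : Type*} {A B : ι → Type*} [∀ i, NonUnitalCStarAlgebra (A i)]
  [∀ i, NonUnitalCStarAlgebra (B i)]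

theorem memℓp_infty_map (φ : ∀ i, A i →⋆ₙₐ[ℂ] B i) (a : lp A ∞) :
    Memℓp (fun i => φ i (a i)) ∞ :=
  (lp.memℓp a).mono' fun i => NonUnitalStarAlgHom.norm_apply_le (φ i) (a i)

noncomputable def inftyMap (φ : ∀ i, A i →⋆ₙₐ[ℂ] B i) : lp A ∞ →⋆ₙₐ[ℂ] lp B ∞ where
  toFun a := ⟨fun i => φ i (a i), memℓp_infty_map φ a⟩
  map_smul' c a := lp.ext <| funext fun i => map_smul (φ i) c (a i)
  map_zero' := lp.ext <| funext fun i => map_zero (φ i)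
  map_add' a b := lp.ext <| funext fun i => map_add (φ i) (a i) (b i)
  map_mul' a b := lp.ext <| funext fun i => map_mul (φ i) (a i) (b i)
  map_star' a := lp.ext <| funext fun i => map_star (φ i) (a i)

theorem inftyMap_injective {φ : ∀ i, A i →⋆ₙₐ[ℂ] B i} (hφ : ∀ i, Function.Injective (φ i)) :
    Function.Injective (inftyMap φ) :=
  fun _ _ hab => lp.ext <| funext fun i => hφ i congr($hab i)

end InftyMap

section BlockDiag

variable {ι : Type*} {G : ι → Type*} [∀ i, NormedAddCommGroup (G i)]
  [∀ i, InnerProductSpace ℂ (G i)]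

theorem norm_apply_apply_le (T : lp (fun i => G i →L[ℂ] G i) ∞) (x : lp G 2) (i : ι) :
    ‖T i (x i)‖ ≤ ‖T‖ * ‖x i‖ :=
  (T i).le_of_opNorm_le (lp.norm_apply_le_norm ENNReal.top_ne_zero T i) (x i)

theorem memℓp_two_apply_apply (T : lp (fun i => G i →L[ℂ] G i) ∞) (x : lp G 2) :
    Memℓp (fun i => T i (x i)) 2 :=
  ((lp.memℓp x).norm.const_mul ‖T‖).mono (norm_apply_apply_le T x)

noncomputable def blockDiagCLM (T : lp (fun i => G i →L[ℂ] G i) ∞) : lp G 2 →L[ℂ] lp G 2 :=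
  LinearMap.mkContinuous
    { toFun x := ⟨fun i => T i (x i), memℓp_two_apply_apply T x⟩
      map_add' x y := lp.ext <| funext fun i => map_add (T i) (x i) (y i)
      map_smul' c x := lp.ext <| funext fun i => map_smul (T i) c (x i) }
    ‖T‖ fun x => by
      calc _ ≤ ‖‖T‖ • x‖ := lp.norm_mono two_ne_zero fun i =>
              (norm_apply_apply_le T x i).trans_eq (by simp [lp.coeFn_smul, norm_smul])
        _ = ‖T‖ * ‖x‖ := by rw [lp.norm_const_smul two_ne_zero, norm_norm]

theorem norm_blockDiagCLM_le (T : lp (fun i => G i →L[ℂ] G i) ∞) : ‖blockDiagCLM T‖ ≤ ‖T‖ :=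
  LinearMap.mkContinuous_norm_le _ (norm_nonneg T) _

variable [∀ i, CompleteSpace (G i)]

theorem star_blockDiagCLM (T : lp (fun i => G i →L[ℂ] G i) ∞) :
    blockDiagCLM (star T) = star (blockDiagCLM T) := by
  refine (ContinuousLinearMap.eq_adjoint_iff _ _).mpr fun x y => ?_
  simp only [lp.inner_eq_tsum]
  exact tsum_congr fun i => ContinuousLinearMap.adjoint_inner_left (T i) (y i) (x i)

noncomputable def blockDiag : lp (fun i => G i →L[ℂ] G i) ∞ →⋆ₙₐ[ℂ] (lp G 2 →L[ℂ] lp G 2) where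
  toFun := blockDiagCLM
  map_smul' _ _ := rfl
  map_zero' := rfl
  map_add' _ _ := rfl
  map_mul' _ _ := rfl
  map_star' := star_blockDiagCLM

@[simp]
theorem blockDiag_apply (T : lp (fun i => G i →L[ℂ] G i) ∞) (x : lp G 2) (i : ι) :
    blockDiag T x i = T i (x i) :=
  rfl

theorem blockDiag_single [DecidableEq ι] (T : lp (fun i => G i →L[ℂ] G i) ∞) (i : ι) (v : G i) :
    blockDiag T (lp.single 2 i v) = lp.single 2 i (T i v) :=
  lp.ext <| funext fun j => by
    simp only [blockDiag_apply, lp.single_apply]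
    exact Pi.apply_single (fun j => T j) (fun j => map_zero (T j)) i v j

theorem blockDiag_injective : Function.Injective (blockDiag (G := G)) := by
  classical
  refine (injective_iff_map_eq_zero _).mpr fun T hT => lp.ext <| funext fun i =>
    ContinuousLinearMap.ext fun v => ?_
  simpa [blockDiag_single, lp.single_apply_self] using congr($hT (lp.single 2 i v) i)

variable {T : lp (fun i => G i →L[ℂ] G i) ∞} {s : Finset ι}

theorem blockDiag_eq_sum_single [DecidableEq ι] (hT : ∀ i ∉ s, T i = 0) (x : lp G 2) :
    blockDiag T x = ∑ i ∈ s, lp.single 2 i (T i (x i)) :=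
  lp.ext <| funext fun j => by
    rw [blockDiag_apply, sum_single_apply]
    split_ifs with hj
    · rfl
    · simp [hT j hj]

theorem finiteDimensional_range_blockDiag (hT : ∀ i ∉ s, T i = 0)
    (hfin : ∀ i, FiniteDimensional ℂ (LinearMap.range (T i).toLinearMap)) :
    FiniteDimensional ℂ (LinearMap.range (blockDiag T).toLinearMap) := by
  classical
  let W (i : ι) : Submodule ℂ (lp G 2) := (LinearMap.range (T i).toLinearMap).map (lp.lsingle 2 i)
  refine Submodule.finiteDimensional_of_le (S₂ := s.sup W) ?_
  rintro _ ⟨x, rfl⟩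
  rw [ContinuousLinearMap.coe_coe, blockDiag_eq_sum_single hT]
  exact Submodule.sum_mem _ fun i hi => Finset.le_sup (f := W) hi
    (Submodule.mem_map_of_mem (LinearMap.mem_range_self _ (x i)))

theorem isFinRankProj_blockDiag (hT : ∀ i ∉ s, T i = 0) (hproj : ∀ i, IsFinRankProj (T i)) :
    IsFinRankProj (blockDiag T) := by
  simp only [isFinRankProj_iff] at hproj ⊢
  exact ⟨(lp.isStarProjection_iff.mpr fun i => (hproj i).1).map blockDiag,
    finiteDimensional_range_blockDiag hT fun i => (hproj i).2⟩

theorem norm_blockDiag_sub_le [DecidableEq ι] (hT : ∀ i ∉ s, T i = 0) (x : lp G 2) :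
    ‖blockDiag T x - x‖ ≤
      ∑ i ∈ s, ‖T i (x i) - x i‖ + ‖x - ∑ i ∈ s, lp.single 2 i (x i)‖ := by
  have hsplit : blockDiag T x - x =
      ∑ i ∈ s, lp.single 2 i (T i (x i) - x i) - (x - ∑ i ∈ s, lp.single 2 i (x i)) := by
    simp only [blockDiag_eq_sum_single hT, lp.single_sub, Finset.sum_sub_distrib]
    abel
  calc ‖blockDiag T x - x‖
      ≤ ‖∑ i ∈ s, lp.single 2 i (T i (x i) - x i)‖ + ‖x - ∑ i ∈ s, lp.single 2 i (x i)‖ :=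
        hsplit ▸ norm_sub_le _ _
    _ ≤ _ := by
        gcongr
        refine (norm_sum_le _ _).trans_eq (Finset.sum_congr rfl fun i _ => ?_)
        exact lp.norm_single (by norm_num) i _

theorem norm_commutator_blockDiag_le {t : lp (fun i => G i →L[ℂ] G i) ∞} {C : ℝ} (hC : 0 ≤ C)
    (h : ∀ i, ‖t i ∘L T i - T i ∘L t i‖ ≤ C) :
    ‖blockDiag t ∘L blockDiag T - blockDiag T ∘L blockDiag t‖ ≤ C := by
  change ‖blockDiag t * blockDiag T - blockDiag T * blockDiag t‖ ≤ C
  rw [← map_mul, ← map_mul, ← map_sub]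
  exact (norm_blockDiagCLM_le _).trans <| lp.norm_le_of_forall_le hC fun i => h i

end BlockDiag

end lp

section QuasidiagonalBlocks

variable {ι : Type*} {G : ι → Type*} [∀ i, NormedAddCommGroup (G i)]
  [∀ i, InnerProductSpace ℂ (G i)] [∀ i, CompleteSpace (G i)] {S : ∀ i, Set (G i →L[ℂ] G i)}

theorem exists_isFinRankProj_blockDiag [DecidableEq ι] (hS : ∀ i, QDSet (S i))
    (ω : Finset (lp (fun i => G i →L[ℂ] G i) ∞)) (hω : ∀ t ∈ ω, ∀ i, t i ∈ S i)
    (χ : Finset (lp G 2)) (s : Finset ι) {δ : ℝ} (hδ : 0 < δ) :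
    ∃ q : lp (fun i => G i →L[ℂ] G i) ∞, IsFinRankProj (lp.blockDiag q) ∧
      (∀ t ∈ ω, ‖lp.blockDiag t ∘L lp.blockDiag q - lp.blockDiag q ∘L lp.blockDiag t‖ ≤ δ) ∧
      ∀ x ∈ χ, ‖lp.blockDiag q x - x‖ ≤ s.card * δ + ‖x - ∑ i ∈ s, lp.single 2 i (x i)‖ := by
  classical
  choose P hP_proj hP_comm hP_vec using fun i =>
    hS i (ω.image fun t => t i) (by
      rw [Finset.coe_image]
      exact Set.image_subset_iff.mpr fun t ht => hω t ht i)
      (χ.image fun x => x i) δ hδ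
  let q : lp (fun i => G i →L[ℂ] G i) ∞ := ∑ i ∈ s, lp.single ∞ i (P i)
  have hq (i) : q i = if i ∈ s then P i else 0 := lp.sum_single_apply s P i
  have hq_out (i) (hi : i ∉ s) : q i = 0 := by rw [hq, if_neg hi]
  refine ⟨q, lp.isFinRankProj_blockDiag hq_out fun i => ?_,
    fun t ht => lp.norm_commutator_blockDiag_le hδ.le fun i => ?_,
    fun x hx => (lp.norm_blockDiag_sub_le hq_out x).trans ?_⟩
  · rw [hq]
    split_ifs
    exacts [hP_proj i, isFinRankProj_zero]
  · rw [hq]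
    split_ifs
    exacts [hP_comm i _ (Finset.mem_image_of_mem _ ht), by simpa using hδ.le]
  · gcongr
    refine (Finset.sum_le_card_nsmul s _ δ fun i hi => ?_).trans_eq (nsmul_eq_mul _ _)
    simpa [hq, hi] using hP_vec i _ (Finset.mem_image_of_mem _ hx)

theorem QDSet.image_blockDiag (hS : ∀ i, QDSet (S i)) :
    QDSet (lp.blockDiag '' {t : lp (fun i => G i →L[ℂ] G i) ∞ | ∀ i, t i ∈ S i}) := by
  classical
  intro ω hω χ ε hε
  choose t ht using fun T : ω => hω T.2
  obtain ⟨s, hs⟩ := lp.exists_finset_forall_norm_sub_sum_single_lt (by norm_num : (2 : ℝ≥0∞) ≠ ∞)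
    χ (half_pos hε)
  set δ := ε / (2 * (s.card + 1)) with hδ_def
  have hδ : 0 < δ := by positivity
  have hδε : δ ≤ ε := div_le_self hε.le (by nlinarith)
  have hcard : s.card * δ ≤ ε / 2 := by
    rw [hδ_def, mul_div_assoc', div_le_div_iff₀ (by positivity) two_pos]
    nlinarith
  obtain ⟨q, hq_proj, hq_comm, hq_vec⟩ := exists_isFinRankProj_blockDiag hS (ω.attach.image t)
    (fun _ hu => by
      obtain ⟨T, -, rfl⟩ := Finset.mem_image.mp hu
      exact (ht T).1) χ s hδ
  refine ⟨lp.blockDiag q, hq_proj, fun T hT => ?_, fun x hx => ?_⟩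
  · have hT_eq : lp.blockDiag (t ⟨T, hT⟩) = T := (ht ⟨T, hT⟩).2
    rw [← hT_eq]
    exact (hq_comm _ (Finset.mem_image_of_mem _ (Finset.mem_attach _ _))).trans hδε
  · linarith [hq_vec x hx, hs x hx]

end QuasidiagonalBlocks

theorem isQD_lp_infty {ι : Type} {A : ι → Type*} [∀ i, NonUnitalCStarAlgebra (A i)]
    (hA : ∀ i, IsQD (A i)) : IsQD (lp A ∞) := by
  choose r hr using hA
  let (i : ι) : NormedAddCommGroup (r i).space := (r i).nacg
  let (i : ι) : InnerProductSpace ℂ (r i).space := (r i).ipc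
  let (i : ι) : CompleteSpace (r i).space := (r i).cs
  refine ⟨⟨lp (fun i => (r i).space) 2, lp.blockDiag.comp (lp.inftyMap fun i => (r i).hom)⟩,
    lp.blockDiag_injective.comp (lp.inftyMap_injective fun i => (hr i).1),
    (QDSet.image_blockDiag fun i => (hr i).2).mono ?_⟩
  rintro _ ⟨a, rfl⟩
  exact ⟨_, fun i => ⟨a i, rfl⟩, rfl⟩

/-- The direct product `Π_n A_n` (bounded sequences with sup norm, realized as
`lp A ∞`) of a sequence of `C*`-algebras is quasidiagonal iff each `A n` is. -/
theorem isQD_pi_iff (A : ℕ → Type) [∀ n, NonUnitalCStarAlgebra (A n)] :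
    IsQD (lp A ∞) ↔ ∀ n, IsQD (A n) :=
  ⟨fun h n => h.of_injective _ (lp.singleNonUnitalStarAlgHom_injective n), isQD_lp_infty⟩
end

section
/- Let E be a C*-algebra, I ⊂ E a closed two-sided ideal admitting an approximate unit of projections (p_n) which is quasicentral in E (‖[p_n, x]‖ → 0 for all x ∈ E), and let π : E → E/I be the quotient map. Then for every x ∈ E, ‖x‖ = max( liminf_n ‖p_n x p_n‖, ‖π(x)‖ ). -/
/-!
With `q = 1 - p`, every `x` splits as `p x p + q x q + (p x q + q x p)`. The corners `p x p` and
`q x q` are orthogonal, so the norm of their sum is the larger of their norms, while the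
off-diagonal terms are bounded by the commutator `‖p x - x p‖`, which tends to `0` by
quasicentrality. Since `x - q x q ∈ I` and `p` is an approximate unit for `I`, the norms
`‖qₙ x qₙ‖` tend to `dist(x, I)`.
-/

open Filter Topology

theorem norm_add_eq_max_of_mul_star_eq_zero {A : Type*} [NonUnitalCStarAlgebra A] {a b : A}
    (h₁ : a * star b = 0) (h₂ : star a * b = 0) : ‖a + b‖ = max ‖a‖ ‖b‖ := by
  have h₃ : star b * a = 0 := by simpa using congr(star $h₂)
  have horth : star a * a * (star b * b) = 0 := by
    rw [mul_assoc, ← mul_assoc a, h₁, zero_mul, mul_zero]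
  refine (mul_self_inj (norm_nonneg _) (le_max_of_le_left (norm_nonneg _))).1 ?_
  -- `(a + b)⋆(a + b) = a⋆a + b⋆b`, a sum of self-adjoint elements with zero product
  rw [← CStarRing.norm_star_mul_self, star_add, add_mul, mul_add, mul_add, h₂, h₃, zero_add,
    add_zero, (IsSelfAdjoint.star_mul_self a).norm_add_eq_max (.star_mul_self b) horth,
    CStarRing.norm_star_mul_self, CStarRing.norm_star_mul_self]
  rcases le_total ‖a‖ ‖b‖ with h | h
  · simp [h, mul_self_le_mul_self (norm_nonneg a) h]
  · simp [h, mul_self_le_mul_self (norm_nonneg b) h]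

namespace IsStarProjection

section NormedRing

variable {A : Type*} [NormedRing A] [StarRing A] [CStarRing A] {p : A}

theorem norm_mul_left_le (hp : IsStarProjection p) (x : A) : ‖p * x‖ ≤ ‖x‖ :=
  (norm_mul_le _ _).trans (mul_le_of_le_one_left (norm_nonneg _) (IsStarProjection.norm_le _ hp))

theorem norm_mul_right_le (hp : IsStarProjection p) (x : A) : ‖x * p‖ ≤ ‖x‖ :=
  (norm_mul_le _ _).trans (mul_le_of_le_one_right (norm_nonneg _) (IsStarProjection.norm_le _ hp))

theorem norm_mul_mul_self_le (hp : IsStarProjection p) (x : A) : ‖p * x * p‖ ≤ ‖x‖ :=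
  (hp.norm_mul_right_le _).trans (hp.norm_mul_left_le x)

theorem norm_mul_mul_one_sub_le (hp : IsStarProjection p) (x : A) :
    ‖p * x * (1 - p)‖ ≤ ‖p * x - x * p‖ := by
  have : p * x * (1 - p) = (p * x - x * p) * (1 - p) := by
    rw [sub_mul _ (x * p), mul_assoc x, hp.mul_one_sub_self, mul_zero, sub_zero]
  exact this ▸ hp.one_sub.norm_mul_right_le _

theorem norm_one_sub_mul_mul_le (hp : IsStarProjection p) (x : A) :
    ‖(1 - p) * x * p‖ ≤ ‖p * x - x * p‖ := by
  have hcomm : x * (1 - p) - (1 - p) * x = p * x - x * p := by noncomm_ring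
  simpa only [sub_sub_cancel, norm_sub_rev _ (x * (1 - p)), hcomm] using
    hp.one_sub.norm_mul_mul_one_sub_le x

theorem norm_one_sub_mul_mul_one_sub_le (hp : IsStarProjection p) (x y : A) :
    ‖(1 - p) * x * (1 - p)‖ ≤ ‖x - y‖ + ‖p * y - y‖ :=
  calc ‖(1 - p) * x * (1 - p)‖ ≤ ‖(1 - p) * x‖ := hp.one_sub.norm_mul_right_le _
    _ = ‖(1 - p) * (x - y) - (p * y - y)‖ := by noncomm_ring
    _ ≤ ‖x - y‖ + ‖p * y - y‖ :=
      (norm_sub_le _ _).trans (by gcongr; exact hp.one_sub.norm_mul_left_le _)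

end NormedRing

theorem norm_le_max_add_two_mul_norm_commutator {A : Type*} [CStarAlgebra A] {p : A}
    (hp : IsStarProjection p) (x : A) :
    ‖x‖ ≤ max ‖p * x * p‖ ‖(1 - p) * x * (1 - p)‖ + 2 * ‖p * x - x * p‖ := by
  have hcorners :
      ‖p * x * p + (1 - p) * x * (1 - p)‖ = max ‖p * x * p‖ ‖(1 - p) * x * (1 - p)‖ := by
    have hp' := hp.isSelfAdjoint.star_eq
    have hq' := hp.one_sub.isSelfAdjoint.star_eq
    have hpq := hp.mul_one_sub_self
    apply norm_add_eq_max_of_mul_star_eq_zero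
    · simp only [star_mul, hq', mul_assoc, ← mul_assoc p (1 - p), hpq, zero_mul, mul_zero]
    · simp only [star_mul, hp', mul_assoc, ← mul_assoc p (1 - p), hpq, zero_mul, mul_zero]
  calc ‖x‖
        = ‖(p * x * p + (1 - p) * x * (1 - p)) + (p * x * (1 - p) + (1 - p) * x * p)‖ := by
          congr 1; noncomm_ring
    _ ≤ ‖p * x * p + (1 - p) * x * (1 - p)‖ + (‖p * x * (1 - p)‖ + ‖(1 - p) * x * p‖) :=
      (norm_add_le _ _).trans (by gcongr; exact norm_add_le _ _)
    _ ≤ max ‖p * x * p‖ ‖(1 - p) * x * (1 - p)‖ + 2 * ‖p * x - x * p‖ := by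
      rw [hcorners]
      linarith [hp.norm_mul_mul_one_sub_le x, hp.norm_one_sub_mul_mul_le x]

end IsStarProjection

theorem Ideal.infDist_le_norm_one_sub_mul_mul_one_sub {A : Type*} [NormedRing A] {I : Ideal A}
    {p x : A} (hp : p ∈ I) (hpx : p * x ∈ I) :
    Metric.infDist x I ≤ ‖(1 - p) * x * (1 - p)‖ := by
  have hmem : p * x + x * p - p * x * p ∈ I :=
    I.sub_mem (I.add_mem hpx (I.mul_mem_left x hp)) (I.mul_mem_left _ hp)
  calc Metric.infDist x I ≤ dist x (p * x + x * p - p * x * p) :=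
        Metric.infDist_le_dist_of_mem hmem
    _ = ‖(1 - p) * x * (1 - p)‖ := by rw [dist_eq_norm]; congr 1; noncomm_ring

theorem tendsto_norm_one_sub_mul_mul_one_sub_infDist {A ι : Type*} [NormedRing A] [StarRing A]
    [CStarRing A] {I : Ideal A} {l : Filter ι} {p : ι → A} (hp : ∀ i, IsStarProjection (p i))
    (hpI : ∀ i, p i ∈ I) (happrox : ∀ a ∈ I, Tendsto (fun i => ‖p i * a - a‖) l (𝓝 0))
    {x : A} (hpx : ∀ i, p i * x ∈ I) :
    Tendsto (fun i => ‖(1 - p i) * x * (1 - p i)‖) l (𝓝 (Metric.infDist x I)) := by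
  refine tendsto_order.2 ⟨fun r hr => .of_forall fun i =>
    hr.trans_le (Ideal.infDist_le_norm_one_sub_mul_mul_one_sub (hpI i) (hpx i)), fun r hr => ?_⟩
  obtain ⟨y, hyI, hy⟩ := (Metric.infDist_lt_iff ⟨0, I.zero_mem⟩).1
    (show Metric.infDist x I < Metric.infDist x I + (r - Metric.infDist x I) / 2 by linarith)
  filter_upwards [(happrox y hyI).eventually (gt_mem_nhds (half_pos (sub_pos.2 hr)))] with i hi
  have := (hp i).norm_one_sub_mul_mul_one_sub_le x y
  rw [dist_eq_norm] at hy
  linarith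

theorem le_max_liminf_of_le_max_add {ι : Type*} {l : Filter ι} {a b c : ι → ℝ} {r d : ℝ}
    (ha : l.IsCoboundedUnder (· ≥ ·) a) (hb : Tendsto b l (𝓝 d)) (hc : Tendsto c l (𝓝 0))
    (h : ∀ i, r ≤ max (a i) (b i) + c i) : r ≤ max (liminf a l) d := by
  refine le_of_forall_pos_lt_add fun ε hε => ?_
  have hε2 := half_pos hε
  have hai := frequently_lt_of_liminf_lt ha (lt_add_of_pos_right _ hε2)
  have hbi := hb.eventually (gt_mem_nhds (lt_add_of_pos_right d hε2))
  have hci := hc.eventually (gt_mem_nhds hε2)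
  obtain ⟨i, hai, hbi, hci⟩ := (hai.and_eventually (hbi.and hci)).exists
  calc r ≤ max (a i) (b i) + c i := h i
    _ < max (liminf a l + ε / 2) (d + ε / 2) + ε / 2 := by gcongr; exact max_lt_max hai hbi
    _ = max (liminf a l) d + ε := by rw [max_add_add_right, add_assoc, add_halves]

theorem norm_eq_max_liminf_quotient_general {E : Type*} [CStarAlgebra E]
    (I : Ideal E)
    (hItwoSided : ∀ x ∈ I, ∀ y : E, x * y ∈ I)
    (p : ℕ → E) (hpI : ∀ n, p n ∈ I)
    (hproj : ∀ n, p n * p n = p n ∧ star (p n) = p n)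
    (happrox : ∀ a ∈ I, Tendsto (fun n => ‖p n * a - a‖) atTop (𝓝 0))
    (hqc : ∀ x : E, Tendsto (fun n => ‖p n * x - x * p n‖) atTop (𝓝 0)) :
    ∀ x : E, ‖x‖ = max (Filter.liminf (fun n => ‖p n * x * p n‖) atTop)
      (Metric.infDist x (I : Set E)) := by
  intro x
  have hp (n : ℕ) : IsStarProjection (p n) := ⟨(hproj n).1, (hproj n).2⟩
  have hcorner_le (n : ℕ) : ‖p n * x * p n‖ ≤ ‖x‖ := (hp n).norm_mul_mul_self_le x
  have hcorner_tendsto := tendsto_norm_one_sub_mul_mul_one_sub_infDist hp hpI happrox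
    fun n => hItwoSided _ (hpI n) x
  have hcomm_tendsto : Tendsto (fun n => 2 * ‖p n * x - x * p n‖) atTop (𝓝 0) := by
    simpa using (hqc x).const_mul 2
  refine le_antisymm ?_ (max_le ?_ ?_)
  · exact le_max_liminf_of_le_max_add (isCoboundedUnder_ge_of_le atTop hcorner_le)
      hcorner_tendsto hcomm_tendsto fun n => (hp n).norm_le_max_add_two_mul_norm_commutator x
  · exact liminf_le_of_frequently_le (.of_forall hcorner_le)
      (isBoundedUnder_of ⟨0, fun n => norm_nonneg _⟩)
  · simpa using Metric.infDist_le_dist_of_mem (x := x) I.zero_mem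

/-- If a closed two-sided ideal `I` of a `C*`-algebra `E` has an approximate unit of
projections `(pₙ)` which is quasicentral in `E`, then for every `x ∈ E`,
`‖x‖ = max (liminf ‖pₙ x pₙ‖) ‖π(x)‖`, where `‖π(x)‖ = dist(x, I)` is the quotient norm
in `E/I`. -/
theorem norm_eq_max_liminf_quotient {E : Type*} [CStarAlgebra E]
    (I : Ideal E) (hIclosed : IsClosed (I : Set E))
    (hItwoSided : ∀ x ∈ I, ∀ y : E, x * y ∈ I)
    (p : ℕ → E) (hpI : ∀ n, p n ∈ I)
    (hproj : ∀ n, p n * p n = p n ∧ star (p n) = p n)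
    (hmono : ∀ n, p n * p (n + 1) = p n)
    (happrox : ∀ a ∈ I, Tendsto (fun n => ‖p n * a - a‖) atTop (𝓝 0))
    (hqc : ∀ x : E, Tendsto (fun n => ‖p n * x - x * p n‖) atTop (𝓝 0)) :
    ∀ x : E, ‖x‖ = max (Filter.liminf (fun n => ‖p n * x * p n‖) atTop)
      (Metric.infDist x (I : Set E)) :=
  norm_eq_max_liminf_quotient_general I hItwoSided p hpI hproj happrox hqc
end

section
/- Let R be a C*-algebra which is residually finite dimensional, witnessed by surjective *-homomorphisms π_n : R → A_n onto unital finite dimensional C*-algebras A_n with ⊕_n π_n faithful. Define π̃_n : M(R) → A_n on the multiplier algebra by π̃_n(x) = π_n(x e_n), where e_n ∈ R is any lift of the unit of A_n. Then each π̃_n is a *-homomorphism extending π_n and ⊕_n π̃_n : M(R) → Π_n A_n is injective; in particular M(R) is residually finite dimensional. -/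
namespace MultiplierExtension

variable {R M B : Type*} [NonUnitalCStarAlgebra R] [CStarAlgebra M] [CStarAlgebra B]
  {ι : R →⋆ₙₐ[ℂ] M}

theorem map_eq_zero_of_map_eq_mul (hι : Function.Injective ι)
    (hideal : ∀ (x : M) (r : R), x * ι r ∈ Set.range ι) (φ : R →⋆ₙₐ[ℂ] B)
    {x : M} {u v : R} (h : ι u = x * ι v) (hv : φ v = 0) : φ u = 0 := by
  obtain ⟨w, hw⟩ := hideal (star x * x) v
  have huu : star u * u = star v * w :=
    hι <| by rw [map_mul, map_mul, map_star, map_star, h, hw, star_mul, mul_assoc, mul_assoc]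
  have : star (φ u) * φ u = 0 := by
    rw [← map_star, ← map_mul, huu, map_mul, map_star, hv, star_zero, zero_mul]
  exact (CStarRing.star_mul_self_eq_zero_iff _).mp this

variable (hι : Function.Injective ι) (hideal : ∀ (x : M) (r : R), x * ι r ∈ Set.range ι)
  (e : R)

noncomputable def lift : M →ₗ[ℂ] R where
  toFun x := (hideal x e).choose
  map_add' x y := hι <| by
    have spec z : ι (hideal z e).choose = z * ι e := (hideal z e).choose_spec
    rw [map_add, spec, spec, spec, add_mul]
  map_smul' c x := hι <| by
    have spec z : ι (hideal z e).choose = z * ι e := (hideal z e).choose_spec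
    rw [map_smul, spec, spec, RingHom.id_apply, smul_mul_assoc]

theorem map_lift (x : M) : ι (lift hι hideal e x) = x * ι e :=
  (hideal x e).choose_spec

variable {hι hideal e}

theorem lift_eq_of_map_eq {x : M} {r : R} (h : ι r = x * ι e) : lift hι hideal e x = r :=
  hι <| by rw [map_lift, h]

theorem lift_one : lift hι hideal e 1 = e :=
  lift_eq_of_map_eq (one_mul _).symm

theorem lift_map (s : R) : lift hι hideal e (ι s) = s * e :=
  lift_eq_of_map_eq (map_mul ι s e)

theorem map_lift_mul (x y : M) : ι (lift hι hideal e (x * y)) = x * ι (lift hι hideal e y) := by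
  rw [map_lift, map_lift, mul_assoc]

variable {φ : R →⋆ₙₐ[ℂ] B}

theorem map_eq_map_lift_mul (he : φ e = 1) {x : M} {t s : R} (h : ι t = x * ι s) :
    φ t = φ (lift hι hideal e x) * φ s := by
  have hts : ι (t - lift hι hideal e x * s) = x * ι (s - e * s) := by
    rw [map_sub, map_sub, map_mul, h, map_mul, map_lift, mul_sub, mul_assoc]
  have hes : φ (s - e * s) = 0 := by rw [map_sub, map_mul, he, one_mul, sub_self]
  rw [← sub_eq_zero, ← map_mul, ← map_sub]
  exact map_eq_zero_of_map_eq_mul hι hideal φ hts hes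

theorem map_lift_star (he : φ e = 1) (x : M) :
    φ (lift hι hideal e (star x)) = star (φ (lift hι hideal e x)) := by
  have h : star e * lift hι hideal e (star x) = star (lift hι hideal e x) * e :=
    hι <| by simp only [map_mul, map_star, map_lift, star_mul, mul_assoc]
  simpa only [map_mul, map_star, he, star_one, one_mul, mul_one] using congrArg φ h

variable (hι hideal φ)

noncomputable def extend (he : φ e = 1) : M →⋆ₐ[ℂ] B where
  toFun x := φ (lift hι hideal e x)
  map_one' := by rw [lift_one, he]
  map_mul' x y := map_eq_map_lift_mul he (map_lift_mul x y)
  map_zero' := by simp only [map_zero]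
  map_add' x y := by simp only [map_add]
  commutes' c := by
    simp only [Algebra.algebraMap_eq_smul_one, map_smul, lift_one, he]
  map_star' := map_lift_star he

theorem extend_apply (he : φ e = 1) (x : M) :
    extend hι hideal φ he x = φ (lift hι hideal e x) := rfl

theorem extend_map (he : φ e = 1) (s : R) : extend hι hideal φ he (ι s) = φ s := by
  rw [extend_apply, lift_map, map_mul, he, mul_one]

end MultiplierExtension

theorem RingHom.injective_of_essential {M B : Type*} [Ring M] [TopologicalSpace M] [Ring B]
    [TopologicalSpace B] [T1Space B] {s : Set M}
    (hess : ∀ J : TwoSidedIdeal M, IsClosed (J : Set M) → J ≠ ⊥ →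
      ∃ y, y ∈ J ∧ y ∈ s ∧ y ≠ 0)
    (f : M →+* B) (hf : Continuous f) (hs : ∀ y ∈ s, f y = 0 → y = 0) :
    Function.Injective f := by
  rw [← TwoSidedIdeal.ker_eq_bot]
  by_contra hker
  have hclosed : IsClosed (TwoSidedIdeal.ker f : Set M) := by
    convert isClosed_singleton.preimage hf
    ext
    exact TwoSidedIdeal.mem_ker f
  obtain ⟨y, hyker, hys, hy0⟩ := hess _ hclosed hker
  exact hy0 (hs y hys ((TwoSidedIdeal.mem_ker f).mp hyker))

open MultiplierExtension
open scoped CStarAlgebra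

theorem multiplier_algebra_rfd_general {R M : Type*}
    [NonUnitalCStarAlgebra R] [CStarAlgebra M]
    (ι : R →⋆ₙₐ[ℂ] M) (hιisom : Isometry ι)
    (hideal : ∀ (x : M) (r : R), x * ι r ∈ Set.range ι ∧ ι r * x ∈ Set.range ι)
    (hess : ∀ J : TwoSidedIdeal M, IsClosed (J : Set M) → J ≠ ⊥ →
      ∃ y, y ∈ J ∧ y ∈ Set.range ι ∧ y ≠ 0)
    (m : ℕ → ℕ)
    (π : ∀ n, R →⋆ₙₐ[ℂ] MatOp (m n))
    (hfaithful : ∀ r : R, (∀ n, π n r = 0) → r = 0)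
    (e : ℕ → R) (he : ∀ n, π n (e n) = 1) :
    ∃ πext : ∀ n, M →⋆ₐ[ℂ] MatOp (m n),
      (∀ (n : ℕ) (r : R), πext n (ι r) = π n r) ∧
      (∀ (n : ℕ) (x : M) (r : R), ι r = x * ι (e n) → πext n x = π n r) ∧
      ∀ x : M, (∀ n, πext n x = 0) → x = 0 := by
  have hι := hιisom.injective
  have hleft x r := (hideal x r).1
  let πext n := extend hι hleft (π n) (he n)
  have hπext n r : πext n (ι r) = π n r := extend_map hι hleft (π n) (he n) r
  refine ⟨πext, hπext, fun n x r h => congrArg (π n) (lift_eq_of_map_eq h), fun x hx => ?_⟩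
  have hinj := RingHom.injective_of_essential hess
    (RingHom.pi fun n => (πext n : M →+* MatOp (m n)))
    (continuous_pi fun n => map_continuous (πext n)) ?_
  · exact hinj (funext fun n => (hx n).trans (map_zero (πext n)).symm)
  · rintro _ ⟨r, rfl⟩ hr
    rw [hfaithful r fun n => (hπext n r).symm.trans (congrFun hr n), map_zero]

/-- If `R` is residually finite dimensional, witnessed by surjections `π n` onto unital
finite dimensional `C*`-algebras `S n ⊆ Mₘₙ(ℂ)` which jointly separate points, then the
maps `π̃ n (x) = π n (x * e n)` (where `e n` lifts the unit of `S n`) are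
`*`-homomorphisms on the multiplier algebra `M(R)` extending `π n`, and they jointly
separate the points of `M(R)`; in particular `M(R)` is residually finite dimensional.
Here `M(R)` is formalized as a unital `C*`-algebra `M` containing `R` (via `ι`) as an
essential ideal. -/
theorem multiplier_algebra_rfd {R M : Type*}
    [NonUnitalCStarAlgebra R] [CStarAlgebra M]
    (ι : R →⋆ₙₐ[ℂ] M) (hιisom : Isometry ι)
    (hideal : ∀ (x : M) (r : R), x * ι r ∈ Set.range ι ∧ ι r * x ∈ Set.range ι)
    (hess : ∀ J : TwoSidedIdeal M, IsClosed (J : Set M) → J ≠ ⊥ →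
      ∃ y, y ∈ J ∧ y ∈ Set.range ι ∧ y ≠ 0)
    (m : ℕ → ℕ) (S : ∀ n, StarSubalgebra ℂ (MatOp (m n)))
    (π : ∀ n, R →⋆ₙₐ[ℂ] MatOp (m n))
    (hsurj : ∀ n, Set.range (π n) = (S n : Set (MatOp (m n))))
    (hfaithful : ∀ r : R, (∀ n, π n r = 0) → r = 0)
    (e : ℕ → R) (he : ∀ n, π n (e n) = 1) :
    ∃ πext : ∀ n, M →⋆ₐ[ℂ] MatOp (m n),
      (∀ (n : ℕ) (r : R), πext n (ι r) = π n r) ∧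
      (∀ (n : ℕ) (x : M) (r : R), ι r = x * ι (e n) → πext n x = π n r) ∧
      ∀ x : M, (∀ n, πext n x = 0) → x = 0 :=
  multiplier_algebra_rfd_general ι hιisom hideal hess m π hfaithful e he
end
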